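/- arXiv:1604.00952 — 4 statements merged into one kernel-verified Lean document; each statement's English description precedes it below -/
import Mathlib

section
/- Suppose H: [0,1] → ℝ is differentiable except possibly at s, its derivative equals (r(s,π)·E_max + u(π))·F̃(Q₁(π)) where F̃(Q₁(π)) > 0 for all π, and π ↦ r(s,π)E_max + u(π) is increasing on [0,s) and (s,1] with an upward jump at π = s. Then the set of global minimizers of H over [0,1] is: {π*_low} if s < π*_low; {π*_high} if s > π*_high; and {s} if π*_low ≤ s ≤ π*_high, where π*_low and π*_high are the boundary-adjusted roots of r₁(π)E_max + u(π) = 0 and r₂(π)E_max + u(π) = 0 respectively (r₁(π) = r(s,π) for π > s, r₂(π) = r(s,π) for π < s). -/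
/-!
Off `s`, `H'` has the sign of `r₂ E + u` to the left of `s` and of `r₁ E + u` to the right.
Since `r₂ E + u < r₁ E + u`, both are increasing, and their boundary-adjusted roots are
`πhigh` and `πlow`, this sign is negative left of `m = max πlow (min πhigh s)` (the projection of
`s` onto `[πlow, πhigh]`) and positive right of it. So `H` strictly decreases on `[0, m]` and
strictly increases on `[m, 1]`, and `m` is the unique minimizer.
-/

open Set

section Calculus

variable {H d : ℝ → ℝ} {a b c m : ℝ}

theorem strictMonoOn_Icc_of_hasDerivAt_pos (hH : ContinuousOn H (Icc a b))
    (hd : ∀ x ∈ Ioo a b, HasDerivAt H (d x) x) (hpos : ∀ x ∈ Ioo a b, 0 < d x) :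
    StrictMonoOn H (Icc a b) :=
  strictMonoOn_of_deriv_pos (convex_Icc a b) hH fun x hx => by
    rw [interior_Icc] at hx
    exact (hd x hx).deriv ▸ hpos x hx

theorem strictMonoOn_Icc_of_hasDerivAt_pos_of_ne (hH : ContinuousOn H (Icc a b))
    (hd : ∀ x ∈ Ioo a b, x ≠ c → HasDerivAt H (d x) x)
    (hpos : ∀ x ∈ Ioo a b, x ≠ c → 0 < d x) :
    StrictMonoOn H (Icc a b) := by
  by_cases hc : c ∈ Ioo a b
  · rw [← Icc_union_Icc_eq_Icc hc.1.le hc.2.le]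
    refine StrictMonoOn.union ?_ ?_ (isGreatest_Icc hc.1.le) (isLeast_Icc hc.2.le)
    · exact strictMonoOn_Icc_of_hasDerivAt_pos (hH.mono (Icc_subset_Icc_right hc.2.le))
        (fun x hx => hd x ⟨hx.1, hx.2.trans hc.2⟩ hx.2.ne)
        (fun x hx => hpos x ⟨hx.1, hx.2.trans hc.2⟩ hx.2.ne)
    · exact strictMonoOn_Icc_of_hasDerivAt_pos (hH.mono (Icc_subset_Icc_left hc.1.le))
        (fun x hx => hd x ⟨hc.1.trans hx.1, hx.2⟩ hx.1.ne')
        (fun x hx => hpos x ⟨hc.1.trans hx.1, hx.2⟩ hx.1.ne')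
  · have hne : ∀ x ∈ Ioo a b, x ≠ c := fun x hx hxc => hc (hxc ▸ hx)
    exact strictMonoOn_Icc_of_hasDerivAt_pos hH (fun x hx => hd x hx (hne x hx))
      (fun x hx => hpos x hx (hne x hx))

theorem strictAntiOn_Icc_of_hasDerivAt_neg_of_ne (hH : ContinuousOn H (Icc a b))
    (hd : ∀ x ∈ Ioo a b, x ≠ c → HasDerivAt H (d x) x)
    (hneg : ∀ x ∈ Ioo a b, x ≠ c → d x < 0) :
    StrictAntiOn H (Icc a b) := by
  have := strictMonoOn_Icc_of_hasDerivAt_pos_of_ne hH.neg (fun x hx hxc => (hd x hx hxc).neg)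
    (fun x hx hxc => neg_pos.mpr (hneg x hx hxc))
  exact fun x hx y hy hxy => neg_lt_neg_iff.mp (this hx hy hxy)

theorem minimizers_eq_singleton_of_strictAntiOn_of_strictMonoOn (hm : m ∈ Icc a b)
    (hanti : StrictAntiOn H (Icc a m)) (hmono : StrictMonoOn H (Icc m b)) :
    {π ∈ Icc a b | ∀ π' ∈ Icc a b, H π ≤ H π'} = {m} := by
  have hlt : ∀ π ∈ Icc a b, π ≠ m → H m < H π := by
    intro π hπ hne
    rcases hne.lt_or_gt with h | h
    · exact hanti ⟨hπ.1, h.le⟩ ⟨hm.1, le_rfl⟩ h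
    · exact hmono ⟨le_rfl, hm.2⟩ ⟨h.le, hπ.2⟩ h
  ext π
  simp only [mem_ofPred_eq, mem_singleton_iff]
  constructor
  · rintro ⟨hπ, hmin⟩
    by_contra hne
    exact (hmin m hm).not_gt (hlt π hπ hne)
  · rintro rfl
    refine ⟨hm, fun π' hπ' => ?_⟩
    rcases eq_or_ne π' π with rfl | hne
    · exact le_rfl
    · exact (hlt π' hπ' hne).le

theorem minimizers_eq_singleton_of_hasDerivAt (hH : ContinuousOn H (Icc a b))
    (hd : ∀ x ∈ Icc a b, x ≠ c → HasDerivAt H (d x) x) (hm : m ∈ Icc a b)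
    (hneg : ∀ x ∈ Icc a b, x ≠ c → x < m → d x < 0)
    (hpos : ∀ x ∈ Icc a b, x ≠ c → m < x → 0 < d x) :
    {π ∈ Icc a b | ∀ π' ∈ Icc a b, H π ≤ H π'} = {m} := by
  have hleft : ∀ x ∈ Ioo a m, x ∈ Icc a b := fun x hx => ⟨hx.1.le, hx.2.le.trans hm.2⟩
  have hright : ∀ x ∈ Ioo m b, x ∈ Icc a b := fun x hx => ⟨hm.1.trans hx.1.le, hx.2.le⟩
  refine minimizers_eq_singleton_of_strictAntiOn_of_strictMonoOn hm ?_ ?_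
  · exact strictAntiOn_Icc_of_hasDerivAt_neg_of_ne (hH.mono (Icc_subset_Icc_right hm.2))
      (fun x hx => hd x (hleft x hx)) (fun x hx hxc => hneg x (hleft x hx) hxc hx.2)
  · exact strictMonoOn_Icc_of_hasDerivAt_pos_of_ne (hH.mono (Icc_subset_Icc_left hm.1))
      (fun x hx => hd x (hright x hx)) (fun x hx hxc => hpos x (hright x hx) hxc hx.1)

end Calculus

def IsBoundaryRoot (f : ℝ → ℝ) (a b p : ℝ) : Prop :=
  f p = 0 ∨ (p = a ∧ 0 < f a) ∨ (p = b ∧ f b < 0)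

namespace IsBoundaryRoot

variable {f g : ℝ → ℝ} {a b p q x : ℝ}

theorem neg_of_lt (hp : IsBoundaryRoot f a b p) (hf : StrictMonoOn f (Icc a b))
    (hpab : p ∈ Icc a b) (hx : x ∈ Icc a b) (hxp : x < p) : f x < 0 := by
  rcases hp with h | ⟨rfl, -⟩ | ⟨rfl, h⟩
  · exact h ▸ hf hx hpab hxp
  · exact absurd hx.1 hxp.not_ge
  · exact (hf hx hpab hxp).trans h

theorem pos_of_gt (hp : IsBoundaryRoot f a b p) (hf : StrictMonoOn f (Icc a b))
    (hpab : p ∈ Icc a b) (hx : x ∈ Icc a b) (hpx : p < x) : 0 < f x := by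
  rcases hp with h | ⟨rfl, h⟩ | ⟨rfl, -⟩
  · exact h ▸ hf hpab hx hpx
  · exact h.trans (hf hpab hx hpx)
  · exact absurd hx.2 hpx.not_ge

theorem le_of_forall_lt (hp : IsBoundaryRoot f a b p) (hq : IsBoundaryRoot g a b q)
    (hf : StrictMonoOn f (Icc a b)) (hg : StrictMonoOn g (Icc a b))
    (hpab : p ∈ Icc a b) (hqab : q ∈ Icc a b) (hgf : ∀ x ∈ Icc a b, g x < f x) : p ≤ q := by
  by_contra! hqp
  have hmid : (q + p) / 2 ∈ Icc a b := ⟨by linarith [hqab.1], by linarith [hpab.2]⟩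
  have := hgf _ hmid
  linarith [hp.neg_of_lt hf hpab hmid (by linarith), hq.pos_of_gt hg hqab hmid (by linarith)]

end IsBoundaryRoot

section Jump

variable {y y₁ y₂ s p q x : ℝ}

theorem neg_of_lt_max_min (hy₁ : s < x → y = y₁) (hy₂ : x < s → y = y₂) (hgap : y₂ < y₁)
    (h₁ : x < p → y₁ < 0) (h₂ : x < q → y₂ < 0) (hxs : x ≠ s) (hx : x < max p (min q s)) :
    y < 0 := by
  rcases hxs.lt_or_gt with hlt | hgt
  · rw [hy₂ hlt]
    rcases lt_max_iff.mp hx with hxp | hxq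
    · exact hgap.trans (h₁ hxp)
    · exact h₂ (lt_min_iff.mp hxq).1
  · rw [hy₁ hgt]
    exact h₁ ((lt_max_iff.mp hx).resolve_right fun h => (h.trans_le (min_le_right q s)).not_gt hgt)

theorem pos_of_max_min_lt (hy₁ : s < x → y = y₁) (hy₂ : x < s → y = y₂)
    (h₁ : p < x → 0 < y₁) (h₂ : q < x → 0 < y₂) (hxs : x ≠ s) (hx : max p (min q s) < x) :
    0 < y := by
  obtain ⟨hpx, hqsx⟩ := max_lt_iff.mp hx
  rcases hxs.lt_or_gt with hlt | hgt
  · rw [hy₂ hlt]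
    exact h₂ ((min_lt_iff.mp hqsx).resolve_right hlt.not_gt)
  · rw [hy₁ hgt]
    exact h₁ hpx

end Jump

theorem optimal_target_soc_projection_general
    (Emax : ℝ) (hEmax : 0 < Emax)
    (r₁ r₂ u : ℝ → ℝ) (s : ℝ)
    (h₁mono : StrictMonoOn (fun π => r₁ π * Emax + u π) (Set.Icc 0 1))
    (h₂mono : StrictMonoOn (fun π => r₂ π * Emax + u π) (Set.Icc 0 1))
    (hgap : ∀ π ∈ Set.Icc (0:ℝ) 1, r₂ π < r₁ π)
    (r : ℝ → ℝ)
    (hr_hi : ∀ π, s < π → r π = r₁ π)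
    (hr_lo : ∀ π, π < s → r π = r₂ π)
    (F : ℝ → ℝ) (hF : ∀ π ∈ Set.Icc (0:ℝ) 1, 0 < F π)
    (H : ℝ → ℝ) (hHcont : ContinuousOn H (Set.Icc 0 1))
    (hH' : ∀ π ∈ Set.Icc (0:ℝ) 1, π ≠ s →
      HasDerivAt H ((r π * Emax + u π) * F π) π)
    (πlow πhigh : ℝ)
    (hlow_mem : πlow ∈ Set.Icc (0:ℝ) 1) (hhigh_mem : πhigh ∈ Set.Icc (0:ℝ) 1)
    (hlow : r₁ πlow * Emax + u πlow = 0 ∨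
      (πlow = 0 ∧ 0 < r₁ 0 * Emax + u 0) ∨ (πlow = 1 ∧ r₁ 1 * Emax + u 1 < 0))
    (hhigh : r₂ πhigh * Emax + u πhigh = 0 ∨
      (πhigh = 0 ∧ 0 < r₂ 0 * Emax + u 0) ∨ (πhigh = 1 ∧ r₂ 1 * Emax + u 1 < 0)) :
    (s < πlow → {π ∈ Set.Icc (0:ℝ) 1 | ∀ π' ∈ Set.Icc (0:ℝ) 1, H π ≤ H π'} = {πlow}) ∧
    (πhigh < s → {π ∈ Set.Icc (0:ℝ) 1 | ∀ π' ∈ Set.Icc (0:ℝ) 1, H π ≤ H π'} = {πhigh}) ∧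
    (πlow ≤ s → s ≤ πhigh →
      {π ∈ Set.Icc (0:ℝ) 1 | ∀ π' ∈ Set.Icc (0:ℝ) 1, H π ≤ H π'} = {s}) := by
  have hlow : IsBoundaryRoot (fun π => r₁ π * Emax + u π) 0 1 πlow := hlow
  have hhigh : IsBoundaryRoot (fun π => r₂ π * Emax + u π) 0 1 πhigh := hhigh
  have hjump : ∀ π ∈ Icc (0:ℝ) 1, r₂ π * Emax + u π < r₁ π * Emax + u π := fun π hπ => by
    gcongr
    exact hgap π hπ
  have horder : πlow ≤ πhigh := hlow.le_of_forall_lt hhigh h₁mono h₂mono hlow_mem hhigh_mem hjump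
  have hr₁ : ∀ x, s < x → r x * Emax + u x = r₁ x * Emax + u x := fun x h => by rw [hr_hi x h]
  have hr₂ : ∀ x, x < s → r x * Emax + u x = r₂ x * Emax + u x := fun x h => by rw [hr_lo x h]
  have hmin : {π ∈ Icc (0:ℝ) 1 | ∀ π' ∈ Icc (0:ℝ) 1, H π ≤ H π'} = {max πlow (min πhigh s)} := by
    refine minimizers_eq_singleton_of_hasDerivAt hHcont hH'
      ⟨le_max_of_le_left hlow_mem.1, max_le hlow_mem.2 (min_le_of_left_le hhigh_mem.2)⟩
      (fun x hx hxs hxm => mul_neg_of_neg_of_pos ?_ (hF x hx))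
      (fun x hx hxs hxm => mul_pos ?_ (hF x hx))
    · exact neg_of_lt_max_min (hr₁ x) (hr₂ x) (hjump x hx) (hlow.neg_of_lt h₁mono hlow_mem hx)
        (hhigh.neg_of_lt h₂mono hhigh_mem hx) hxs hxm
    · exact pos_of_max_min_lt (hr₁ x) (hr₂ x) (hlow.pos_of_gt h₁mono hlow_mem hx)
        (hhigh.pos_of_gt h₂mono hhigh_mem hx) hxs hxm
  refine ⟨fun h => ?_, fun h => ?_, fun h₁ h₂ => ?_⟩ <;> rw [hmin]
  · rw [max_eq_left ((min_le_right _ _).trans h.le)]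
  · rw [min_eq_left h.le, max_eq_right horder]
  · rw [min_eq_right h₂, max_eq_right h₁]

/-- Structural core of Theorem 1: if `H' π = (r(s,π)E_max + u(π))·F(π)` off `π = s` with
`F > 0`, where `r(s,·)E_max + u` is strictly increasing on either side of `s` with an upward
jump at `s`, then the global minimizers of `H` over `[0,1]` are exactly the projection of
`s` onto `[π*_low, π*_high]`. -/
theorem optimal_target_soc_projection
    (Emax : ℝ) (hEmax : 0 < Emax)
    (r₁ r₂ u : ℝ → ℝ) (s : ℝ) (hs : s ∈ Set.Icc (0:ℝ) 1)
    (hr₁cont : ContinuousOn r₁ (Set.Icc 0 1)) (hr₂cont : ContinuousOn r₂ (Set.Icc 0 1))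
    (hucont : ContinuousOn u (Set.Icc 0 1))
    (h₁mono : StrictMonoOn (fun π => r₁ π * Emax + u π) (Set.Icc 0 1))
    (h₂mono : StrictMonoOn (fun π => r₂ π * Emax + u π) (Set.Icc 0 1))
    (hgap : ∀ π ∈ Set.Icc (0:ℝ) 1, r₂ π < r₁ π)
    (r : ℝ → ℝ)
    (hr_hi : ∀ π, s < π → r π = r₁ π)
    (hr_lo : ∀ π, π < s → r π = r₂ π)
    (F : ℝ → ℝ) (hF : ∀ π ∈ Set.Icc (0:ℝ) 1, 0 < F π)
    (H : ℝ → ℝ) (hHcont : ContinuousOn H (Set.Icc 0 1))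
    (hH' : ∀ π ∈ Set.Icc (0:ℝ) 1, π ≠ s →
      HasDerivAt H ((r π * Emax + u π) * F π) π)
    (πlow πhigh : ℝ)
    (hlow_mem : πlow ∈ Set.Icc (0:ℝ) 1) (hhigh_mem : πhigh ∈ Set.Icc (0:ℝ) 1)
    (hlow : r₁ πlow * Emax + u πlow = 0 ∨
      (πlow = 0 ∧ 0 < r₁ 0 * Emax + u 0) ∨ (πlow = 1 ∧ r₁ 1 * Emax + u 1 < 0))
    (hhigh : r₂ πhigh * Emax + u πhigh = 0 ∨
      (πhigh = 0 ∧ 0 < r₂ 0 * Emax + u 0) ∨ (πhigh = 1 ∧ r₂ 1 * Emax + u 1 < 0)) :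
    (s < πlow → {π ∈ Set.Icc (0:ℝ) 1 | ∀ π' ∈ Set.Icc (0:ℝ) 1, H π ≤ H π'} = {πlow}) ∧
    (πhigh < s → {π ∈ Set.Icc (0:ℝ) 1 | ∀ π' ∈ Set.Icc (0:ℝ) 1, H π ≤ H π'} = {πhigh}) ∧
    (πlow ≤ s → s ≤ πhigh →
      {π ∈ Set.Icc (0:ℝ) 1 | ∀ π' ∈ Set.Icc (0:ℝ) 1, H π ≤ H π'} = {s}) :=
  optimal_target_soc_projection_general Emax hEmax r₁ r₂ u s h₁mono h₂mono hgap r hr_hi hr_lo F hF H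
    hHcont hH' πlow πhigh hlow_mem hhigh_mem hlow hhigh
end

section
/- Let h(s,π) = E_I[cost_e(s,π)] where cost_e(s,π) = (c_e/η)·min(P_max·I, (π−s)E_max) if s < π, equals −c_e η·min(P_max·I, (s−π)E_max) if s > π, and 0 if s = π, with I a nonnegative random variable with density f_I. Then for π > s, ∂h/∂π = (c_e E_max/η)·F̃_I((π−s)E_max/P_max), and for π < s, ∂h/∂π = c_e η E_max·F̃_I((s−π)E_max/P_max), where F̃_I is the complementary CDF of I. In particular h(s,·) is not differentiable at π = s unless η = 1 or c_e = 0. -/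
/-!
On each side of `π = s` the expected cost is a constant (`c_e/η` resp. `-c_e η`) times
`Ψ(q) = E[min (P_max I, q)]` at `q = |π - s| E_max`. Splitting the expectation at
`I = q / P_max` gives a closed form for `Ψ` whose derivative in `q` is `F̃_I (q / P_max)`:
the two boundary terms `± q f_I (q / P_max) / P_max` cancel. The chain rule gives both
one-sided derivatives, and at `π = s` they are `c_e E_max F̃_I(0) / η` and
`c_e η E_max F̃_I(0)`, which differ when `η < 1`.
-/

open Set MeasureTheory Filter

section

variable {E : Type*} [NormedAddCommGroup E] [NormedSpace ℝ E]

lemma hasDerivAt_integral_Ioi [CompleteSpace E] {f : ℝ → E} {a : ℝ} (hf : Continuous f)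
    (ha : IntegrableOn f (Ioi a)) (t : ℝ) :
    HasDerivAt (fun u => ∫ x in Ioi u, f x) (-f t) t := by
  have htail : (fun u => ∫ x in Ioi u, f x) =
      fun u => (∫ x in Ioi a, f x) - ∫ x in a..u, f x := by
    funext u
    rw [← intervalIntegral.integral_interval_add_Ioi' (hf.intervalIntegrable u a) ha,
      intervalIntegral.integral_symm]
    abel
  rw [htail]
  exact ((hf.integral_hasStrictDerivAt a t).hasDerivAt).const_sub _

lemma not_differentiableAt_of_hasDerivWithinAt_Ici_Iic {f : ℝ → E} {a b : E} {x : ℝ}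
    (hright : HasDerivWithinAt f a (Ici x) x) (hleft : HasDerivWithinAt f b (Iic x) x)
    (hab : a ≠ b) : ¬ DifferentiableAt ℝ f x := fun hf =>
  hab <| ((uniqueDiffOn_Ici x x self_mem_Ici).eq_deriv _ hright
      hf.hasDerivAt.hasDerivWithinAt).trans
    ((uniqueDiffOn_Iic x x self_mem_Iic).eq_deriv _ hleft hf.hasDerivAt.hasDerivWithinAt).symm

end

/-- The paper's `∫₀^{Q₁} P x f(x) dx + q F̃(Q₁)` with `Q₁ = q / P`, i.e. `E[min (P I, q)]`.
-/
noncomputable def clippedMean (P : ℝ) (f : ℝ → ℝ) (q : ℝ) : ℝ :=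
  P * (∫ x in (0 : ℝ)..q / P, x * f x) + q * ∫ x in Ioi (q / P), f x

@[simp]
lemma clippedMean_zero (P : ℝ) (f : ℝ → ℝ) : clippedMean P f 0 = 0 := by
  simp [clippedMean]

lemma setIntegral_min_mul_eq_clippedMean {P q : ℝ} {f : ℝ → ℝ} (hP : 0 < P) (hq : 0 ≤ q)
    (hf : IntegrableOn f (Ici 0)) (hf_moment : IntegrableOn (fun x => x * f x) (Ici 0)) :
    ∫ i in Ici 0, min (P * i) q * f i = clippedMean P f q := by
  set c := q / P
  have hc : 0 ≤ c := div_nonneg hq hP.le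
  have hbelow : EqOn (fun i => P * (i * f i)) (fun i => min (P * i) q * f i) (Icc 0 c) := by
    intro i hi
    dsimp only
    rw [min_eq_left ((le_div_iff₀' hP).1 hi.2), mul_assoc]
  have habove : EqOn (fun i => q * f i) (fun i => min (P * i) q * f i) (Ioi c) := by
    intro i hi
    dsimp only
    rw [min_eq_right ((div_lt_iff₀' hP).1 hi).le]
  have hint_below : IntegrableOn (fun i => P * (i * f i)) (Icc 0 c) :=
    (hf_moment.mono_set Icc_subset_Ici_self).const_mul P
  have hint_above : IntegrableOn (fun i => q * f i) (Ioi c) :=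
    (hf.mono_set (Ioi_subset_Ici hc)).const_mul q
  rw [← Icc_union_Ioi_eq_Ici hc, setIntegral_union
      ((Iic_disjoint_Ioi le_rfl).mono_left Icc_subset_Iic_self) measurableSet_Ioi
      (hint_below.congr_fun hbelow measurableSet_Icc)
      (hint_above.congr_fun habove measurableSet_Ioi),
    ← setIntegral_congr_fun measurableSet_Icc hbelow,
    ← setIntegral_congr_fun measurableSet_Ioi habove,
    integral_const_mul, integral_const_mul, integral_Icc_eq_integral_Ioc,
    ← intervalIntegral.integral_of_le hc, clippedMean]

lemma hasDerivAt_clippedMean {P a : ℝ} {f : ℝ → ℝ} (hP : P ≠ 0) (hf : Continuous f)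
    (ha : IntegrableOn f (Ioi a)) (q : ℝ) :
    HasDerivAt (clippedMean P f) (∫ x in Ioi (q / P), f x) q := by
  have hdiv : HasDerivAt (fun u => u / P) (1 / P) q := by
    simpa using (hasDerivAt_id q).div_const P
  have hmoment : HasDerivAt (fun u => ∫ x in (0 : ℝ)..u / P, x * f x)
      (q / P * f (q / P) * (1 / P)) q :=
    (((continuous_id.mul hf).integral_hasStrictDerivAt 0 (q / P)).hasDerivAt.comp q hdiv :)
  have htail : HasDerivAt (fun u => ∫ x in Ioi (u / P), f x) (-f (q / P) * (1 / P)) q :=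
    ((hasDerivAt_integral_Ioi hf ha (q / P)).comp q hdiv :)
  refine ((hmoment.const_mul P).add ((hasDerivAt_id' q).mul htail)).congr_deriv ?_
  field_simp
  ring

theorem expected_charging_cost_derivative_general
    (ce η Emax Pmax : ℝ)
    (hη : η ∈ Set.Ioc (0:ℝ) 1) (hEmax : 0 < Emax) (hPmax : 0 < Pmax)
    (fI : ℝ → ℝ) (hfI_cont : Continuous fI)
    (hfI_int : IntegrableOn fI (Set.Ici 0))
    (hfI_moment : IntegrableOn (fun x => x * fI x) (Set.Ici 0))
    (FtilI : ℝ → ℝ)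
    (hFtilI : ∀ t, FtilI t = ∫ x in Set.Ioi t, fI x)
    (hFpos : ∀ t, 0 < FtilI t)
    (costE : ℝ → ℝ → ℝ → ℝ)
    (hcostE : ∀ s π i, costE s π i =
      if s < π then (ce / η) * min (Pmax * i) ((π - s) * Emax)
      else if π < s then -(ce * η) * min (Pmax * i) ((s - π) * Emax)
      else 0)
    (h : ℝ → ℝ → ℝ)
    (hh : ∀ s π, h s π = ∫ i in Set.Ici (0:ℝ), costE s π i * fI i)
    (s : ℝ) :
    (∀ π, s < π →
      HasDerivAt (fun p => h s p)
        ((ce * Emax / η) * FtilI ((π - s) * Emax / Pmax)) π) ∧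
    (∀ π, π < s →
      HasDerivAt (fun p => h s p)
        (ce * η * Emax * FtilI ((s - π) * Emax / Pmax)) π) ∧
    (η < 1 → 0 < ce → ¬ DifferentiableAt ℝ (fun p => h s p) s) := by
  obtain rfl : FtilI = fun t => ∫ x in Ioi t, fI x := funext hFtilI
  set Ψ := clippedMean Pmax fI
  have hΨ : ∀ q, HasDerivAt Ψ (∫ x in Ioi (q / Pmax), fI x) q :=
    hasDerivAt_clippedMean hPmax.ne' hfI_cont (hfI_int.mono_set Ioi_subset_Ici_self)
  have hright : ∀ p, s ≤ p → h s p = ce / η * Ψ ((p - s) * Emax) := by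
    intro p hp
    rcases hp.eq_or_lt with rfl | hlt
    · simp [hh, hcostE, Ψ]
    · simp only [hh, hcostE, if_pos hlt, mul_assoc, integral_const_mul]
      rw [setIntegral_min_mul_eq_clippedMean hPmax (mul_nonneg (sub_nonneg.2 hp) hEmax.le)
        hfI_int hfI_moment]
  have hleft : ∀ p, p ≤ s → h s p = -(ce * η) * Ψ ((s - p) * Emax) := by
    intro p hp
    rcases hp.eq_or_lt with rfl | hlt
    · simp [hh, hcostE, Ψ]
    · simp only [hh, hcostE, if_neg hp.not_gt, if_pos hlt, mul_assoc, integral_const_mul]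
      rw [setIntegral_min_mul_eq_clippedMean hPmax (mul_nonneg (sub_nonneg.2 hp) hEmax.le)
        hfI_int hfI_moment]
  have hright_deriv : ∀ p, HasDerivAt (fun u => ce / η * Ψ ((u - s) * Emax))
      (ce * Emax / η * ∫ x in Ioi ((p - s) * Emax / Pmax), fI x) p := by
    intro p
    refine (((hΨ _).comp p (((hasDerivAt_id' p).sub_const s).mul_const Emax)).const_mul _
      ).congr_deriv ?_
    ring
  have hleft_deriv : ∀ p, HasDerivAt (fun u => -(ce * η) * Ψ ((s - u) * Emax))
      (ce * η * Emax * ∫ x in Ioi ((s - p) * Emax / Pmax), fI x) p := by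
    intro p
    refine (((hΨ _).comp p (((hasDerivAt_id' p).const_sub s).mul_const Emax)).const_mul _
      ).congr_deriv ?_
    ring
  refine ⟨fun π hπ => (hright_deriv π).congr_of_eventuallyEq ?_,
    fun π hπ => (hleft_deriv π).congr_of_eventuallyEq ?_, fun hη1 hce => ?_⟩
  · filter_upwards [Ioi_mem_nhds hπ] with p hp using hright p hp.le
  · filter_upwards [Iio_mem_nhds hπ] with p hp using hleft p hp.le
  · refine not_differentiableAt_of_hasDerivWithinAt_Ici_Iic
      ((hright_deriv s).hasDerivWithinAt.congr hright (hright s le_rfl))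
      ((hleft_deriv s).hasDerivWithinAt.congr hleft (hleft s le_rfl)) (ne_of_gt ?_)
    set F₀ := ∫ x in Ioi ((s - s) * Emax / Pmax), fI x
    have hmass : 0 < ce * Emax * F₀ := mul_pos (mul_pos hce hEmax) (hFpos _)
    calc ce * η * Emax * F₀ < ce * Emax * F₀ := by nlinarith
      _ < ce * Emax / η * F₀ := by
        rw [div_mul_eq_mul_div, lt_div_iff₀ hη.1]
        nlinarith

/-- Equation (17) of the paper: derivative of the expected charging cost in the target
SoC `π`, and non-differentiability at `π = s` unless `η = 1` or `c_e = 0`. -/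
theorem expected_charging_cost_derivative
    (ce η Emax Pmax : ℝ)
    (hce : 0 ≤ ce) (hη : η ∈ Set.Ioc (0:ℝ) 1) (hEmax : 0 < Emax) (hPmax : 0 < Pmax)
    (fI : ℝ → ℝ) (hfI_nonneg : ∀ x, 0 ≤ fI x) (hfI_cont : Continuous fI)
    (hfI_int : IntegrableOn fI (Set.Ici 0))
    (hfI_moment : IntegrableOn (fun x => x * fI x) (Set.Ici 0))
    (FtilI : ℝ → ℝ)
    (hFtilI : ∀ t, FtilI t = ∫ x in Set.Ioi t, fI x)
    (hFpos : ∀ t, 0 < FtilI t)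
    (costE : ℝ → ℝ → ℝ → ℝ)
    (hcostE : ∀ s π i, costE s π i =
      if s < π then (ce / η) * min (Pmax * i) ((π - s) * Emax)
      else if π < s then -(ce * η) * min (Pmax * i) ((s - π) * Emax)
      else 0)
    (h : ℝ → ℝ → ℝ)
    (hh : ∀ s π, h s π = ∫ i in Set.Ici (0:ℝ), costE s π i * fI i)
    (s : ℝ) (hs : s ∈ Set.Icc (0:ℝ) 1) :
    (∀ π, s < π →
      HasDerivAt (fun p => h s p)
        ((ce * Emax / η) * FtilI ((π - s) * Emax / Pmax)) π) ∧
    (∀ π, π < s →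
      HasDerivAt (fun p => h s p)
        (ce * η * Emax * FtilI ((s - π) * Emax / Pmax)) π) ∧
    (η < 1 → 0 < ce → ¬ DifferentiableAt ℝ (fun p => h s p) s) :=
  expected_charging_cost_derivative_general ce η Emax Pmax hη hEmax hPmax fI hfI_cont hfI_int
    hfI_moment FtilI hFtilI hFpos costE hcostE h hh s
end

section
/- Let the state transition be s' = clamp(s + sgn(π−s)·min(P_max·i/E_max, |π−s|) + κ·e/E_max, 0, 1) with κ ∈ {η, −1/η}, i, e ≥ 0, P_max, E_max > 0, η ∈ (0,1], and policy π being the projection of s onto a fixed interval [a,b] ⊆ [0,1]. Then the transition map s ↦ s' is nondecreasing in s for each fixed (i, e, κ). -/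
/-!
Write `π s = min (max s a) b` and `c = Pmax * i / Emax ≥ 0`. The term `sign x * min c |x|`
is the clamp of `x` to `[-c, c]`, a monotone 1-Lipschitz map `φ`, so the unclamped update is
`s + φ (π s - s)`. Moving `s` up can lower `φ (π s - s)` by at most the drop of `π s - s`,
which is at most the rise of `s` because `π` is monotone; the constant drift `κ e / Emax` and
the outer clamp to `[0, 1]` preserve order.
-/

theorem Real.sign_mul_min_abs {c : ℝ} (hc : 0 ≤ c) (x : ℝ) :
    Real.sign x * min c |x| = max (-c) (min c x) := by
  rcases lt_trichotomy x 0 with hx | rfl | hx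
  · rw [Real.sign_of_neg hx, abs_of_neg hx, min_eq_right (hx.le.trans hc), neg_one_mul,
      ← max_neg_neg, neg_neg]
  · simp [hc]
  · rw [Real.sign_of_pos hx, abs_of_pos hx, one_mul,
      max_eq_right ((neg_nonpos.2 hc).trans (le_min hc hx.le))]

theorem Monotone.add_comp_of_lipschitzWith_one {φ g : ℝ → ℝ} (hφ : Monotone φ)
    (hφL : LipschitzWith 1 φ) (hg : Monotone fun s => s + g s) :
    Monotone fun s => s + φ (g s) := by
  intro s t hst
  rcases le_total (g s) (g t) with hle | hle
  · exact add_le_add hst (hφ hle)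
  · have hφ_drop : φ (g s) - φ (g t) ≤ g s - g t := by
      simpa [Real.dist_eq, abs_of_nonneg (sub_nonneg.2 hle)] using
        (le_abs_self _).trans (hφL.dist_le_mul (g s) (g t))
    have hsum := hg hst
    dsimp only at hsum ⊢
    linarith

theorem monotone_add_clamp_projection (a b c : ℝ) :
    Monotone fun s : ℝ => s + max (-c) (min c (min (max s a) b - s)) := by
  have hclamp_mono : Monotone fun x : ℝ => max (-c) (min c x) := fun _ _ h =>
    max_le_max le_rfl (min_le_min le_rfl h)
  have hclamp_lip : LipschitzWith 1 fun x : ℝ => max (-c) (min c x) :=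
    (LipschitzWith.id.const_min c).const_max (-c)
  have hπ : Monotone fun s : ℝ => min (max s a) b := fun _ _ h =>
    min_le_min_right b (max_le_max_right a h)
  refine hclamp_mono.add_comp_of_lipschitzWith_one hclamp_lip ?_
  simpa only [add_sub_cancel] using hπ

theorem transition_monotone_in_state_general
    (a b Pmax Emax κ i e : ℝ)
    (hPmax : 0 < Pmax) (hEmax : 0 < Emax)
    (hi : 0 ≤ i) :
    Monotone (fun s : ℝ =>
      min (max (s
        + Real.sign (min (max s a) b - s)
            * min (Pmax * i / Emax) |min (max s a) b - s|
        + κ * e / Emax) 0) 1) := by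
  have hc : 0 ≤ Pmax * i / Emax := by positivity
  simp_rw [Real.sign_mul_min_abs hc]
  have hstep := (monotone_add_clamp_projection a b (Pmax * i / Emax)).add_const (κ * e / Emax)
  exact fun s t h => min_le_min_right 1 (max_le_max_right 0 (hstep h))

/-- Monotonicity of the clamped state transition under the projection (threshold) policy:
for fixed disturbances `(i, e)` and sign `κ ∈ {η, −1/η}`, the next state is a nondecreasing
function of the current state. -/
theorem transition_monotone_in_state
    (a b Pmax Emax η κ i e : ℝ)
    (ha : 0 ≤ a) (hab : a ≤ b) (hb : b ≤ 1)
    (hPmax : 0 < Pmax) (hEmax : 0 < Emax) (hη : η ∈ Set.Ioc (0:ℝ) 1)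
    (hκ : κ = η ∨ κ = -(1/η))
    (hi : 0 ≤ i) (he : 0 ≤ e) :
    Monotone (fun s : ℝ =>
      min (max (s
        + Real.sign (min (max s a) b - s)
            * min (Pmax * i / Emax) |min (max s a) b - s|
        + κ * e / Emax) 0) 1) :=
  transition_monotone_in_state_general a b Pmax Emax κ i e hPmax hEmax hi
end

section
/- Let h*(s) = min_{π∈[0,1]} h(s,π) where h(s,π) is differentiable in E_max with ∂h/∂E_max given by (1_{π≥s}/η − 1_{π<s}·η)c_e|π−s|F̃_I(Q₁) − (c_p p₁(1−π)/η)F̃_E(E_max(1−π)/η)F̃_I(Q₁) − c_p p₋₁ η π F̃_E(η E_max π)F̃_I(Q₁), and the interior optimality condition r(s,π) = 0 relates the first term to the penalty terms: (1_{π≥s}/η − 1_{π<s}η)c_e = −(c_p p₁/η)F̃_E(E_max(1−π)/η) + c_p p₋₁ η F̃_E(η E_max π). Then substituting the optimality condition yields ∂h*/∂E_max = −(1_{π≥s}/η + 1_{π<s}η)c_e s F̃_I(Q₁) − (c_p p₁/η)F̃_E(E_max(1−π)/η)F̃_I(Q₁) ≤ 0, i.e., the minimized single-stage cost is nonincreasing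 in the battery capacity E_max. -/
open Set

/- On either side of `s` the signed marginal energy cost times `|π - s|` is the unsigned one
times `π - s`. Then `∂h/∂E_max` minus the claimed expression is `π F̃_I(Q₁) r(s,π)`, which
vanishes at the optimum, and what remains is a sum of nonpositive terms. -/

theorem ite_neg_mul_abs_sub_eq_ite_mul_sub (a b s π : ℝ) :
    (if s ≤ π then a else -b) * |π - s| = (if s ≤ π then a else b) * (π - s) := by
  split_ifs with h
  · rw [abs_of_nonneg (sub_nonneg.mpr h)]
  · rw [abs_of_neg (sub_neg.mpr (not_le.mp h))]
    ring

theorem single_stage_cost_derivative_nonpositive_general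
    (ce cp η p₁ pm1 s π Emax : ℝ)
    (hce : 0 ≤ ce) (hcp : 0 ≤ cp) (hη : η ∈ Set.Ioc (0:ℝ) 1)
    (hp₁ : 0 ≤ p₁)
    (hs : s ∈ Set.Icc (0:ℝ) 1)
    (FtilI FtilE : ℝ → ℝ)
    (hFI : ∀ t, FtilI t ∈ Set.Icc (0:ℝ) 1) (hFE : ∀ t, FtilE t ∈ Set.Icc (0:ℝ) 1)
    (Q₁ : ℝ)
    -- interior optimality condition r(s,π) = 0:
    (hopt : (if s ≤ π then 1/η else η) * ce
        + (cp * p₁ / η) * FtilE (Emax * (1 - π) / η)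
        - cp * pm1 * η * FtilE (η * Emax * π) = 0) :
    ((if s ≤ π then 1/η else -η) * ce * |π - s| * FtilI Q₁
      - (cp * p₁ * (1 - π) / η) * FtilE (Emax * (1 - π) / η) * FtilI Q₁
      - cp * pm1 * η * π * FtilE (η * Emax * π) * FtilI Q₁
      = -((if s ≤ π then 1/η else η)) * ce * s * FtilI Q₁
        - (cp * p₁ / η) * FtilE (Emax * (1 - π) / η) * FtilI Q₁) ∧
    ((if s ≤ π then 1/η else -η) * ce * |π - s| * FtilI Q₁
      - (cp * p₁ * (1 - π) / η) * FtilE (Emax * (1 - π) / η) * FtilI Q₁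
      - cp * pm1 * η * π * FtilE (η * Emax * π) * FtilI Q₁ ≤ 0) := by
  have hsign := ite_neg_mul_abs_sub_eq_ite_mul_sub (1 / η) η s π
  have henvelope : ((if s ≤ π then 1/η else -η) * ce * |π - s| * FtilI Q₁
      - (cp * p₁ * (1 - π) / η) * FtilE (Emax * (1 - π) / η) * FtilI Q₁
      - cp * pm1 * η * π * FtilE (η * Emax * π) * FtilI Q₁
      = -((if s ≤ π then 1/η else η)) * ce * s * FtilI Q₁
        - (cp * p₁ / η) * FtilE (Emax * (1 - π) / η) * FtilI Q₁) := by
    linear_combination (ce * FtilI Q₁) * hsign + (π * FtilI Q₁) * hopt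
  refine ⟨henvelope, henvelope.trans_le ?_⟩
  have hη0 := hη.1
  have hs0 := hs.1
  have hFI0 := (hFI Q₁).1
  have hFE0 := (hFE (Emax * (1 - π) / η)).1
  have henergy : 0 ≤ (if s ≤ π then 1/η else η) * ce * s * FtilI Q₁ := by positivity
  have hpenalty : 0 ≤ (cp * p₁ / η) * FtilE (Emax * (1 - π) / η) * FtilI Q₁ := by positivity
  linarith

/-- Envelope computation of Appendix C (equations (29)–(31)): substituting the interior
optimality condition `r(s,π) = 0` into `∂h/∂E_max` yields a manifestly nonpositive
expression, so the minimized single-stage cost is nonincreasing in the capacity. -/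
theorem single_stage_cost_derivative_nonpositive
    (ce cp η p₁ pm1 s π Emax Pmax : ℝ)
    (hce : 0 ≤ ce) (hcp : 0 ≤ cp) (hη : η ∈ Set.Ioc (0:ℝ) 1)
    (hp₁ : 0 ≤ p₁) (hpm1 : 0 ≤ pm1)
    (hs : s ∈ Set.Icc (0:ℝ) 1) (hπ : π ∈ Set.Icc (0:ℝ) 1)
    (hEmax : 0 < Emax) (hPmax : 0 < Pmax)
    (FtilI FtilE : ℝ → ℝ)
    (hFI : ∀ t, FtilI t ∈ Set.Icc (0:ℝ) 1) (hFE : ∀ t, FtilE t ∈ Set.Icc (0:ℝ) 1)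
    (Q₁ : ℝ) (hQ₁ : Q₁ = |π - s| * Emax / Pmax)
    -- interior optimality condition r(s,π) = 0:
    (hopt : (if s ≤ π then 1/η else η) * ce
        + (cp * p₁ / η) * FtilE (Emax * (1 - π) / η)
        - cp * pm1 * η * FtilE (η * Emax * π) = 0) :
    ((if s ≤ π then 1/η else -η) * ce * |π - s| * FtilI Q₁
      - (cp * p₁ * (1 - π) / η) * FtilE (Emax * (1 - π) / η) * FtilI Q₁
      - cp * pm1 * η * π * FtilE (η * Emax * π) * FtilI Q₁
      = -((if s ≤ π then 1/η else η)) * ce * s * FtilI Q₁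
        - (cp * p₁ / η) * FtilE (Emax * (1 - π) / η) * FtilI Q₁) ∧
    ((if s ≤ π then 1/η else -η) * ce * |π - s| * FtilI Q₁
      - (cp * p₁ * (1 - π) / η) * FtilE (Emax * (1 - π) / η) * FtilI Q₁
      - cp * pm1 * η * π * FtilE (η * Emax * π) * FtilI Q₁ ≤ 0) :=
  single_stage_cost_derivative_nonpositive_general ce cp η p₁ pm1 s π Emax hce hcp hη hp₁ hs FtilI
    FtilE hFI hFE Q₁ hopt
end
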